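/- arXiv:2010.08724 — 11 statements merged into one kernel-verified Lean document; each statement's English description precedes it below -/
import Mathlib

section
/- Let X be a normed quasi-algebra with Hausdorff metric h. If sequences (x_n), (y_n) in X satisfy h(x_n, x) → 0 and h(y_n, y) → 0, then h(x_n * y_n, x * y) → 0; that is, the product is continuous with respect to the Hausdorff metric. -/
/-- A quasi-algebra in the sense of Aseev/Dehghanizade–Modarres: a partially
ordered set with addition, zero, real scalar multiplication and a product. -/
structure QuasiAlgebra (X : Type*) [PartialOrder X] where
  add : X → X → X
  zero : X
  smul : ℝ → X → X
  mul : X → X → X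
  add_comm : ∀ x y, add x y = add y x
  add_assoc : ∀ x y z, add x (add y z) = add (add x y) z
  add_zero : ∀ x, add x zero = x
  smul_smul : ∀ (α β : ℝ) (x : X), smul α (smul β x) = smul (α * β) x
  smul_add : ∀ (α : ℝ) (x y : X), smul α (add x y) = add (smul α x) (smul α y)
  one_smul : ∀ x, smul 1 x = x
  zero_smul : ∀ x, smul 0 x = zero
  add_smul_le : ∀ (α β : ℝ) (x : X), smul (α + β) x ≤ add (smul α x) (smul β x)
  add_le_add : ∀ {x y z v : X}, x ≤ y → z ≤ v → add x z ≤ add y v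
  smul_le_smul : ∀ (α : ℝ) {x y : X}, x ≤ y → smul α x ≤ smul α y
  mul_assoc : ∀ x y z, mul x (mul y z) = mul (mul x y) z
  smul_mul : ∀ (α : ℝ) (x y : X), smul α (mul x y) = mul (smul α x) y
  mul_smul : ∀ (α : ℝ) (x y : X), smul α (mul x y) = mul x (smul α y)
  zero_mul_zero : mul zero zero = zero
  mul_add_le : ∀ x y z, mul x (add y z) ≤ add (mul x y) (mul x z)
  add_mul_le : ∀ x y z, mul (add x y) z ≤ add (mul x z) (mul y z)
  mul_le_mul : ∀ {x y z v : X}, x ≤ y → z ≤ v → mul x z ≤ mul y v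

namespace QuasiAlgebra

variable {X : Type*} [PartialOrder X]

/-- `-x = (-1)·x`. -/
def neg (Q : QuasiAlgebra X) (x : X) : X := Q.smul (-1) x

/-- `x - y = x + (-y)`. -/
def sub (Q : QuasiAlgebra X) (x y : X) : X := Q.add x (Q.neg y)

/-- An element is regular if it has an additive inverse. -/
def Regular (Q : QuasiAlgebra X) (x : X) : Prop := ∃ x' : X, Q.add x x' = Q.zero

/-- A norm on a quasi-algebra. -/
structure Norm (Q : QuasiAlgebra X) where
  norm : X → ℝ
  norm_pos : ∀ {x : X}, x ≠ Q.zero → 0 < norm x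
  norm_add : ∀ x y, norm (Q.add x y) ≤ norm x + norm y
  norm_smul : ∀ (α : ℝ) (x : X), norm (Q.smul α x) = |α| * norm x
  norm_mul : ∀ x y, norm (Q.mul x y) ≤ norm x * norm y
  norm_mono : ∀ {x y : X}, x ≤ y → norm x ≤ norm y
  le_of_forall_eps : ∀ {x y : X},
    (∀ ε : ℝ, 0 < ε → ∃ z : X, x ≤ Q.add y z ∧ norm z ≤ ε) → x ≤ y

/-- The Hausdorff metric of a normed quasi-algebra. -/
noncomputable def hmet (Q : QuasiAlgebra X) (N : Q.Norm) (x y : X) : ℝ :=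
  sInf {r : ℝ | 0 ≤ r ∧ ∃ a₁ a₂ : X,
    x ≤ Q.add y a₁ ∧ y ≤ Q.add x a₂ ∧ N.norm a₁ ≤ r ∧ N.norm a₂ ≤ r}

end QuasiAlgebra

/-!
If `x' ≤ x + a` and `y' ≤ y + b`, subdistributivity and monotonicity of the product give
`x' * y' ≤ x * y + (a * y + x * b + a * b)`, an error term of norm at most
`‖a‖ ‖y‖ + ‖x‖ ‖b‖ + ‖a‖ ‖b‖`. Applied in both directions of the Hausdorff metric this yields
`h(x' * y', x * y) ≤ s ‖y‖ + ‖x‖ t + 3 s t` with `s = h(x', x)` and `t = h(y', y)`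
(the factor `3` comes from `‖x'‖ ≤ ‖x‖ + s`, `‖y'‖ ≤ ‖y‖ + t`), and the right-hand side tends
to `0` with `s` and `t`.
-/

open Filter Topology

namespace QuasiAlgebra

variable {X : Type*} [PartialOrder X] {Q : QuasiAlgebra X}

namespace Norm

variable (N : Q.Norm)

theorem norm_zero : N.norm Q.zero = 0 := by
  simpa [Q.zero_smul] using N.norm_smul 0 Q.zero

theorem norm_nonneg (z : X) : 0 ≤ N.norm z := by
  by_cases h : z = Q.zero
  · rw [h, N.norm_zero]
  · exact (N.norm_pos h).le

theorem norm_le_of_le_add {u v a : X} (h : u ≤ Q.add v a) : N.norm u ≤ N.norm v + N.norm a :=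
  (N.norm_mono h).trans (N.norm_add v a)

end Norm

theorem zero_le_add_neg (v : X) : Q.zero ≤ Q.add v (Q.neg v) := by
  simpa [Q.one_smul, Q.zero_smul, neg] using Q.add_smul_le 1 (-1) v

theorem le_add_sub (u v : X) : u ≤ Q.add v (Q.sub u v) :=
  calc u = Q.add u Q.zero := (Q.add_zero u).symm
    _ ≤ Q.add u (Q.add v (Q.neg v)) := Q.add_le_add le_rfl (zero_le_add_neg v)
    _ = Q.add v (Q.sub u v) := by
      rw [sub, Q.add_assoc, Q.add_comm u v, ← Q.add_assoc]

theorem mul_add_add_le (u v a b : X) :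
    Q.mul (Q.add u a) (Q.add v b)
      ≤ Q.add (Q.mul u v) (Q.add (Q.mul a v) (Q.add (Q.mul u b) (Q.mul a b))) :=
  calc Q.mul (Q.add u a) (Q.add v b)
      ≤ Q.add (Q.mul u (Q.add v b)) (Q.mul a (Q.add v b)) := Q.add_mul_le _ _ _
    _ ≤ Q.add (Q.add (Q.mul u v) (Q.mul u b)) (Q.add (Q.mul a v) (Q.mul a b)) :=
      Q.add_le_add (Q.mul_add_le _ _ _) (Q.mul_add_le _ _ _)
    _ = Q.add (Q.mul u v) (Q.add (Q.mul a v) (Q.add (Q.mul u b) (Q.mul a b))) := by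
      rw [← Q.add_assoc, Q.add_assoc (Q.mul u b), Q.add_comm (Q.mul u b), ← Q.add_assoc]

theorem exists_mul_le_mul_add (N : Q.Norm) {u' v' u v a b : X}
    (hu : u' ≤ Q.add u a) (hv : v' ≤ Q.add v b) :
    ∃ c, Q.mul u' v' ≤ Q.add (Q.mul u v) c ∧
      N.norm c ≤ N.norm a * N.norm v + N.norm u * N.norm b + N.norm a * N.norm b := by
  refine ⟨_, (Q.mul_le_mul hu hv).trans (mul_add_add_le u v a b), ?_⟩
  have h₁ := N.norm_add (Q.mul a v) (Q.add (Q.mul u b) (Q.mul a b))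
  have h₂ := N.norm_add (Q.mul u b) (Q.mul a b)
  linarith [N.norm_mul a v, N.norm_mul u b, N.norm_mul a b]

section Hausdorff

variable (N : Q.Norm)

theorem hmet_set_nonempty (x y : X) :
    {r : ℝ | 0 ≤ r ∧ ∃ a₁ a₂ : X,
      x ≤ Q.add y a₁ ∧ y ≤ Q.add x a₂ ∧ N.norm a₁ ≤ r ∧ N.norm a₂ ≤ r}.Nonempty :=
  ⟨max (N.norm (Q.sub x y)) (N.norm (Q.sub y x)),
    (N.norm_nonneg _).trans (le_max_left _ _),
    _, _, le_add_sub x y, le_add_sub y x, le_max_left _ _, le_max_right _ _⟩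

theorem hmet_nonneg (x y : X) : 0 ≤ Q.hmet N x y :=
  le_csInf (hmet_set_nonempty N x y) fun _ hr => hr.1

theorem hmet_le {x y a₁ a₂ : X} {r : ℝ} (h₁ : x ≤ Q.add y a₁) (h₂ : y ≤ Q.add x a₂)
    (hr₁ : N.norm a₁ ≤ r) (hr₂ : N.norm a₂ ≤ r) : Q.hmet N x y ≤ r :=
  csInf_le ⟨0, fun _ hr => hr.1⟩ ⟨(N.norm_nonneg a₁).trans hr₁, a₁, a₂, h₁, h₂, hr₁, hr₂⟩

theorem exists_le_add_of_hmet_lt {x y : X} {t : ℝ} (ht : Q.hmet N x y < t) :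
    ∃ a₁ a₂ : X, x ≤ Q.add y a₁ ∧ y ≤ Q.add x a₂ ∧ N.norm a₁ ≤ t ∧ N.norm a₂ ≤ t := by
  obtain ⟨r, ⟨_, a₁, a₂, h₁, h₂, hr₁, hr₂⟩, hrt⟩ :=
    exists_lt_of_csInf_lt (hmet_set_nonempty N x y) ht
  exact ⟨a₁, a₂, h₁, h₂, hr₁.trans hrt.le, hr₂.trans hrt.le⟩

theorem hmet_mul_le_of_lt {x' y' x y : X} {s t : ℝ}
    (hs : Q.hmet N x' x < s) (ht : Q.hmet N y' y < t) :
    Q.hmet N (Q.mul x' y') (Q.mul x y) ≤ s * N.norm y + N.norm x * t + 3 * (s * t) := by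
  obtain ⟨a₁, a₂, ha₁, ha₂, ha₁s, ha₂s⟩ := exists_le_add_of_hmet_lt N hs
  obtain ⟨b₁, b₂, hb₁, hb₂, hb₁t, hb₂t⟩ := exists_le_add_of_hmet_lt N ht
  obtain ⟨c₁, hc₁, hc₁n⟩ := exists_mul_le_mul_add N ha₁ hb₁
  obtain ⟨c₂, hc₂, hc₂n⟩ := exists_mul_le_mul_add N ha₂ hb₂
  have hx' : N.norm x' ≤ N.norm x + s := (N.norm_le_of_le_add ha₁).trans (by linarith)
  have hy' : N.norm y' ≤ N.norm y + t := (N.norm_le_of_le_add hb₁).trans (by linarith)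
  have hs₀ : 0 ≤ s := (hmet_nonneg N x' x).trans hs.le
  have ht₀ : 0 ≤ t := (hmet_nonneg N y' y).trans ht.le
  refine hmet_le N hc₁ hc₂ (hc₁n.trans ?_) (hc₂n.trans ?_)
  · have h₁ := mul_le_mul_of_nonneg_right ha₁s (N.norm_nonneg y)
    have h₂ := mul_le_mul_of_nonneg_left hb₁t (N.norm_nonneg x)
    have h₃ := _root_.mul_le_mul ha₁s hb₁t (N.norm_nonneg b₁) hs₀
    linarith [mul_nonneg hs₀ ht₀]
  · have h₁ := _root_.mul_le_mul ha₂s hy' (N.norm_nonneg y') hs₀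
    have h₂ := _root_.mul_le_mul hx' hb₂t (N.norm_nonneg b₂) (add_nonneg (N.norm_nonneg x) hs₀)
    have h₃ := _root_.mul_le_mul ha₂s hb₂t (N.norm_nonneg b₂) hs₀
    linarith

theorem hmet_mul_le (x' y' x y : X) :
    Q.hmet N (Q.mul x' y') (Q.mul x y) ≤
      Q.hmet N x' x * N.norm y + N.norm x * Q.hmet N y' y
        + 3 * (Q.hmet N x' x * Q.hmet N y' y) := by
  set s := Q.hmet N x' x
  set t := Q.hmet N y' y
  set f : ℝ → ℝ := fun ε => (s + ε) * N.norm y + N.norm x * (t + ε) + 3 * ((s + ε) * (t + ε))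
  have hf : Tendsto f (𝓝[>] 0) (𝓝 (f 0)) :=
    tendsto_nhdsWithin_of_tendsto_nhds (by fun_prop : Continuous f).continuousAt
  have hle : ∀ᶠ ε in 𝓝[>] (0 : ℝ), Q.hmet N (Q.mul x' y') (Q.mul x y) ≤ f ε :=
    eventually_nhdsWithin_of_forall fun ε (hε : 0 < ε) =>
      hmet_mul_le_of_lt N (lt_add_of_pos_right s hε) (lt_add_of_pos_right t hε)
  simpa [f] using ge_of_tendsto hf hle

end Hausdorff

end QuasiAlgebra

/-- the product of a normed quasi-algebra is continuous with
respect to the Hausdorff metric. -/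
theorem stmt_1 {X : Type*} [PartialOrder X] (Q : QuasiAlgebra X) (N : Q.Norm)
    (xs ys : ℕ → X) (x y : X)
    (hx : Filter.Tendsto (fun n => Q.hmet N (xs n) x) Filter.atTop (nhds 0))
    (hy : Filter.Tendsto (fun n => Q.hmet N (ys n) y) Filter.atTop (nhds 0)) :
    Filter.Tendsto (fun n => Q.hmet N (Q.mul (xs n) (ys n)) (Q.mul x y))
      Filter.atTop (nhds 0) := by
  have hbound : Tendsto (fun n => Q.hmet N (xs n) x * N.norm y + N.norm x * Q.hmet N (ys n) y
      + 3 * (Q.hmet N (xs n) x * Q.hmet N (ys n) y)) atTop (𝓝 0) := by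
    simpa using ((hx.mul_const _).add (hy.const_mul _)).add ((hx.mul hy).const_mul 3)
  exact squeeze_zero (fun _ => QuasiAlgebra.hmet_nonneg N _ _)
    (fun _ => QuasiAlgebra.hmet_mul_le N _ _ _ _) hbound
end

section
/- Let X be a normed quasi-algebra with Hausdorff metric h, and let x, y ∈ X. If y is regular, then h(x, y) = ‖x − y‖. -/
/-- if `y` is regular then `h(x,y) = ‖x - y‖`. -/
theorem stmt_3 {X : Type*} [PartialOrder X] (Q : QuasiAlgebra X) (N : Q.Norm)
    (x y : X) (hy : Q.Regular y) :
    Q.hmet N x y = N.norm (Q.sub x y) := by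
  -- basic facts
  have norm_zero : N.norm Q.zero = 0 := by
    have h := N.norm_smul 0 Q.zero
    rw [Q.zero_smul] at h
    simpa using h
  have norm_nonneg : ∀ z : X, 0 ≤ N.norm z := by
    intro z
    by_cases hz : z = Q.zero
    · rw [hz, norm_zero]
    · exact le_of_lt (N.norm_pos hz)
  have zero_le_add_neg : ∀ z : X, Q.zero ≤ Q.add z (Q.neg z) := by
    intro z
    have h := Q.add_smul_le 1 (-1) z
    rw [show (1 : ℝ) + (-1) = 0 by norm_num, Q.zero_smul, Q.one_smul] at h
    exact h
  -- y + (-y) = 0 from regularity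
  obtain ⟨y', hy'⟩ := hy
  have hneg : Q.neg y = y' := by
    have h1 : y' ≤ Q.neg y := by
      have := Q.add_le_add (le_refl y') (zero_le_add_neg y)
      rw [Q.add_zero] at this
      calc y' ≤ Q.add y' (Q.add y (Q.neg y)) := this
        _ = Q.add (Q.add y' y) (Q.neg y) := Q.add_assoc _ _ _
        _ = Q.add Q.zero (Q.neg y) := by rw [Q.add_comm y' y, hy']
        _ = Q.neg y := by rw [Q.add_comm, Q.add_zero]
    have hyy' : y ≤ Q.neg y' := by
      have := Q.add_le_add (le_refl y) (zero_le_add_neg y')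
      rw [Q.add_zero] at this
      calc y ≤ Q.add y (Q.add y' (Q.neg y')) := this
        _ = Q.add (Q.add y y') (Q.neg y') := Q.add_assoc _ _ _
        _ = Q.add Q.zero (Q.neg y') := by rw [hy']
        _ = Q.neg y' := by rw [Q.add_comm, Q.add_zero]
    have h2 : Q.neg y ≤ y' := by
      have := Q.smul_le_smul (-1) hyy'
      rw [show Q.smul (-1) (Q.neg y') = y' by
        unfold QuasiAlgebra.neg; rw [Q.smul_smul]; norm_num; exact Q.one_smul y'] at this
      exact this
    exact le_antisymm h2 h1
  have hyzero : Q.add y (Q.neg y) = Q.zero := by rw [hneg, hy']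
  set S := {r : ℝ | 0 ≤ r ∧ ∃ a₁ a₂ : X,
    x ≤ Q.add y a₁ ∧ y ≤ Q.add x a₂ ∧ N.norm a₁ ≤ r ∧ N.norm a₂ ≤ r} with hS
  -- membership of ‖x - y‖
  have hmem : N.norm (Q.sub x y) ∈ S := by
    refine ⟨norm_nonneg _, Q.sub x y, Q.smul (-1) (Q.sub x y), ?_, ?_, le_refl _, ?_⟩
    · have : Q.add y (Q.sub x y) = x := by
        unfold QuasiAlgebra.sub
        rw [Q.add_comm x (Q.neg y), Q.add_assoc, hyzero, Q.add_comm Q.zero x, Q.add_zero]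
      exact le_of_eq this.symm
    · have hrw : Q.smul (-1) (Q.sub x y) = Q.add (Q.neg x) y := by
        unfold QuasiAlgebra.sub QuasiAlgebra.neg
        rw [Q.smul_add, Q.smul_smul]
        norm_num
        rw [Q.one_smul]
      rw [hrw]
      calc y = Q.add y Q.zero := (Q.add_zero y).symm
        _ ≤ Q.add y (Q.add x (Q.neg x)) := Q.add_le_add (le_refl y) (zero_le_add_neg x)
        _ = Q.add (Q.add y x) (Q.neg x) := Q.add_assoc _ _ _
        _ = Q.add (Q.add x y) (Q.neg x) := by rw [Q.add_comm y x]
        _ = Q.add x (Q.add y (Q.neg x)) := (Q.add_assoc _ _ _).symm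
        _ = Q.add x (Q.add (Q.neg x) y) := by rw [Q.add_comm y (Q.neg x)]
    · rw [N.norm_smul]; norm_num
  -- lower bound
  have hlb : ∀ r ∈ S, N.norm (Q.sub x y) ≤ r := by
    rintro r ⟨hr0, a₁, a₂, hxy, _, hn1, _⟩
    have hsub : Q.sub x y ≤ a₁ := by
      have h1 : Q.add x (Q.neg y) ≤ Q.add (Q.add y a₁) (Q.neg y) :=
        Q.add_le_add hxy (le_refl _)
      have h2 : Q.add (Q.add y a₁) (Q.neg y) = a₁ := by
        rw [Q.add_comm y a₁, ← Q.add_assoc, hyzero, Q.add_zero]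
      unfold QuasiAlgebra.sub
      rw [← h2]; exact h1
    exact le_trans (N.norm_mono hsub) hn1
  unfold QuasiAlgebra.hmet
  rw [← hS]
  exact le_antisymm (csInf_le ⟨_, fun r hr => hlb r hr⟩ hmem)
    (le_csInf ⟨_, hmem⟩ hlb)
end

section
/- Let X be a quasi-algebra and let x ∈ X. If there exists no singular element y ∈ X with x ≤ y, then every element of X is regular (and hence the partial order of X is equality, so X is a real algebra). -/
/-- Auxiliary: the additive structure of a quasi-algebra is a commutative monoid. -/
def qaAddCommMonoid {X : Type*} [PartialOrder X] (Q : QuasiAlgebra X) :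
    AddCommMonoid X :=
  letI : Zero X := ⟨Q.zero⟩
  letI : Add X := ⟨Q.add⟩
  { add_assoc := fun a b c => (Q.add_assoc a b c).symm
    zero_add := fun a => by show Q.add Q.zero a = a; rw [Q.add_comm]; exact Q.add_zero a
    add_zero := Q.add_zero
    add_comm := Q.add_comm
    nsmul := nsmulRec
    nsmul_zero := fun _ => rfl
    nsmul_succ := fun _ _ => rfl }

/-- if some `x` has no singular element above it, then every
element of `X` is regular and the partial order is equality. -/
theorem stmt_8 {X : Type*} [PartialOrder X] (Q : QuasiAlgebra X) (x : X)
    (h : ¬ ∃ y : X, ¬ Q.Regular y ∧ x ≤ y) :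
    (∀ z : X, Q.Regular z) ∧ (∀ a b : X, a ≤ b → a = b) := by
  letI : AddCommMonoid X := qaAddCommMonoid Q
  have hadd : ∀ a b : X, Q.add a b = a + b := fun _ _ => rfl
  have hzero : Q.zero = (0 : X) := rfl
  -- 0 ≤ z - z for every z
  have negz : ∀ z : X, (0 : X) ≤ z + Q.smul (-1) z := by
    intro z
    have h1 := Q.add_smul_le 1 (-1) z
    rw [show (1 + -1 : ℝ) = 0 by ring, Q.zero_smul, Q.one_smul, hadd, hzero] at h1
    exact h1
  -- every element is regular
  have reg : ∀ z : X, Q.Regular z := by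
    intro z
    by_contra hz
    refine h ⟨x + (z + Q.smul (-1) z), ?_, ?_⟩
    · rintro ⟨w, hw⟩
      refine hz ⟨Q.smul (-1) z + (x + w), ?_⟩
      rw [hadd, hzero] at hw ⊢
      rw [← hw]; abel
    · calc x = Q.add x Q.zero := (Q.add_zero x).symm
        _ ≤ x + (z + Q.smul (-1) z) := Q.add_le_add (le_refl x) (negz z)
  refine ⟨reg, ?_⟩
  -- z + (-1)·z = 0 for every z
  have inv : ∀ z : X, z + Q.smul (-1) z = 0 := by
    intro z
    set s := z + Q.smul (-1) z with hs
    obtain ⟨s', hs'⟩ := reg s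
    rw [hadd, hzero] at hs'
    -- (-1)·s = s
    have hns : Q.smul (-1) s = s := by
      rw [hs, show z + Q.smul (-1) z = Q.add z (Q.smul (-1) z) from rfl,
        Q.smul_add, Q.smul_smul, show ((-1 : ℝ) * -1) = 1 by ring, Q.one_smul]
      exact Q.add_comm _ _
    -- (-1)·s' is also an inverse of s
    have h2 : s + Q.smul (-1) s' = 0 := by
      have h3 : Q.smul (-1) (s + s') = (0 : X) := by
        rw [hs', ← hzero, show Q.zero = Q.smul 0 s from (Q.zero_smul s).symm,
          Q.smul_smul]
        rw [show ((-1 : ℝ) * 0) = 0 by ring, Q.zero_smul, hzero]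
      rw [← hadd, Q.smul_add, hadd, hns] at h3
      exact h3
    -- uniqueness of inverses: s' = (-1)·s'
    have h4 : s' = Q.smul (-1) s' := by
      calc s' = s' + (s + Q.smul (-1) s') := by rw [h2, add_zero]
        _ = (s + s') + Q.smul (-1) s' := by abel
        _ = Q.smul (-1) s' := by rw [hs', zero_add]
    -- s' ≤ 0
    have h5 : s' ≤ 0 := by
      have := Q.add_le_add (negz z) (le_refl s')
      rw [hadd, hadd, ← hs, hs'] at this
      rw [show (0 : X) + s' = s' from zero_add s'] at this
      exact this
    -- 0 ≤ s' + s'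
    have h6 : (0 : X) ≤ s' + s' := by
      have := negz s'
      rwa [← h4] at this
    -- s' + s' = 0
    have h7 : s' + s' = 0 := by
      have h8 : s' + s' ≤ 0 := by
        have := Q.add_le_add h5 h5
        rw [hadd, hadd] at this
        rwa [show (0 : X) + 0 = (0 : X) from zero_add _] at this
      exact le_antisymm h8 h6
    -- s = s'
    have h9 : s = s' := by
      calc s = s + (s' + s') := by rw [h7, add_zero]
        _ = (s + s') + s' := by abel
        _ = s' := by rw [hs', zero_add]
    have h10 : (0 : X) ≤ s := negz z
    exact le_antisymm (h9 ▸ h5) h10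
  intro a b hab
  have hneg : Q.smul (-1) a ≤ Q.smul (-1) b := Q.smul_le_smul (-1) hab
  have h1 : (0 : X) ≤ a + Q.smul (-1) b := by
    have := Q.add_le_add (le_refl a) hneg
    rw [hadd, hadd, inv a] at this
    exact this
  have h2 : b ≤ a := by
    have := Q.add_le_add (le_refl b) h1
    rw [hadd, hadd] at this
    rw [show b + (0 : X) = b from add_zero b] at this
    calc b ≤ b + (a + Q.smul (-1) b) := this
      _ = a + (b + Q.smul (-1) b) := by abel
      _ = a := by rw [inv b, add_zero]
  exact le_antisymm hab h2
end

section
/- Let X be a normed quasi-algebra that contains at least one singular element (i.e., X is not a linear space). Then for every x ∈ X there exists a sequence x₁, x₂, x₃, … in X such that x ≤ x₁ ≤ x₂ ≤ x₃ ≤ ⋯ with all the inequalities strict (x ≠ x₁, x₁ ≠ x₂, x₂ ≠ x₃, …). -/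
/-! For a singular `s`, the element `d = s - s` satisfies `0 ≤ d` (from `0·s ≤ 1·s + (-1)·s`) and
`d ≠ 0`. Adding `d` never decreases an element, and never fixes one: `y + d = y` would give
`y + n·d ≤ y` for all `n`, hence `n‖d‖ ≤ 2‖y‖`, contradicting `‖d‖ > 0`. So
`x, x + d, x + d + d, …` is strictly increasing. -/

namespace QuasiAlgebra

variable {X : Type*} [PartialOrder X] (Q : QuasiAlgebra X)

lemma zero_le_sub_self (x : X) : Q.zero ≤ Q.sub x x := by
  simpa only [sub, neg, add_neg_cancel, Q.zero_smul, Q.one_smul] using Q.add_smul_le 1 (-1) x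

lemma sub_self_ne_zero {x : X} (hx : ¬ Q.Regular x) : Q.sub x x ≠ Q.zero :=
  fun h => hx ⟨Q.neg x, h⟩

lemma le_add_of_zero_le {d : X} (hd : Q.zero ≤ d) (y : X) : y ≤ Q.add y d :=
  calc y = Q.add y Q.zero := (Q.add_zero y).symm
    _ ≤ Q.add y d := Q.add_le_add le_rfl hd

lemma natCast_succ_smul_le (n : ℕ) (d : X) :
    Q.smul ((n + 1 : ℕ) : ℝ) d ≤ Q.add (Q.smul n d) d := by
  simpa only [Nat.cast_succ, Q.one_smul] using Q.add_smul_le n 1 d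

lemma add_natCast_smul_le_of_add_eq {y d : X} (h : Q.add y d = y) (n : ℕ) :
    Q.add y (Q.smul n d) ≤ y := by
  induction n with
  | zero => rw [Nat.cast_zero, Q.zero_smul, Q.add_zero]
  | succ n ih =>
    calc Q.add y (Q.smul ((n + 1 : ℕ) : ℝ) d)
        ≤ Q.add y (Q.add (Q.smul n d) d) := Q.add_le_add le_rfl (Q.natCast_succ_smul_le n d)
      _ = Q.add (Q.add y (Q.smul n d)) d := Q.add_assoc _ _ _
      _ ≤ Q.add y d := Q.add_le_add ih le_rfl
      _ = y := h

namespace Norm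

variable {Q}

lemma norm_neg (N : Q.Norm) (x : X) : N.norm (Q.neg x) = N.norm x := by
  rw [neg, N.norm_smul, abs_neg, abs_one, one_mul]

lemma norm_le_two_mul_of_add_le (N : Q.Norm) {a y : X} (h : Q.add a y ≤ y) :
    N.norm a ≤ 2 * N.norm y := by
  have ha : a ≤ Q.add (Q.add a y) (Q.neg y) :=
    calc a ≤ Q.add a (Q.sub y y) := Q.le_add_of_zero_le (Q.zero_le_sub_self y) a
      _ = Q.add (Q.add a y) (Q.neg y) := Q.add_assoc _ _ _
  calc N.norm a ≤ N.norm (Q.add a y) + N.norm (Q.neg y) :=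
        (N.norm_mono ha).trans (N.norm_add _ _)
    _ ≤ N.norm y + N.norm y := _root_.add_le_add (N.norm_mono h) (N.norm_neg y).le
    _ = 2 * N.norm y := (two_mul _).symm

lemma add_ne_self (N : Q.Norm) {d : X} (hd : d ≠ Q.zero) (y : X) : Q.add y d ≠ y := by
  intro h
  have hd_pos : 0 < N.norm d := N.norm_pos hd
  have hbound (n : ℕ) : n * N.norm d ≤ 2 * N.norm y := by
    have h_le : Q.add (Q.smul n d) y ≤ y := by
      rw [Q.add_comm]
      exact Q.add_natCast_smul_le_of_add_eq h n
    simpa only [N.norm_smul, Nat.abs_cast] using N.norm_le_two_mul_of_add_le h_le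
  obtain ⟨n, hn⟩ := exists_nat_gt (2 * N.norm y / N.norm d)
  exact (hbound n).not_gt ((div_lt_iff₀ hd_pos).mp hn)

end Norm

end QuasiAlgebra

/-- in a normed quasi-algebra containing a singular element,
above every element there is a strictly increasing chain. -/
theorem stmt_9 {X : Type*} [PartialOrder X] (Q : QuasiAlgebra X) (N : Q.Norm)
    (hs : ∃ s : X, ¬ Q.Regular s) (x : X) :
    ∃ f : ℕ → X, (x ≤ f 0 ∧ x ≠ f 0) ∧
      ∀ n : ℕ, f n ≤ f (n + 1) ∧ f n ≠ f (n + 1) := by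
  obtain ⟨s, hs⟩ := hs
  have hd : Q.zero ≤ Q.sub s s := Q.zero_le_sub_self s
  have step (y : X) : y ≤ Q.add y (Q.sub s s) ∧ y ≠ Q.add y (Q.sub s s) :=
    ⟨Q.le_add_of_zero_le hd y, (N.add_ne_self (Q.sub_self_ne_zero hs) y).symm⟩
  refine ⟨fun n => (Q.add · (Q.sub s s))^[n + 1] x, step x, fun n => ?_⟩
  simpa only [Function.iterate_succ_apply'] using step _
end

section
/- Let A be a real associative algebra and let p : A → ℝ be sublinear (p(x+y) ≤ p(x) + p(y) and p(α·x) = α·p(x) for all α ≥ 0) and submultiplicative (p(xy) ≤ p(x)p(y) for all x, y ∈ A). Then for all x, y ∈ A, the closed interval [−p(−(xy)), p(xy)] is contained in the pointwise product set [−p(−x), p(x)] · [−p(−y), p(y)] = {st : s ∈ [−p(−x), p(x)], t ∈ [−p(−y), p(y)]}. -/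
/-- for a sublinear submultiplicative `p : A → ℝ` on a real
algebra, `[-p(-(xy)), p(xy)] ⊆ [-p(-x), p(x)] · [-p(-y), p(y)]`. -/
theorem stmt_10 {A : Type*} [Ring A] [Algebra ℝ A] (p : A → ℝ)
    (hadd : ∀ x y : A, p (x + y) ≤ p x + p y)
    (hsmul : ∀ (α : ℝ), 0 ≤ α → ∀ x : A, p (α • x) = α * p x)
    (hmul : ∀ x y : A, p (x * y) ≤ p x * p y) (x y : A) :
    Set.Icc (-(p (-(x * y)))) (p (x * y)) ⊆
      Set.image2 (fun s t => s * t)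
        (Set.Icc (-(p (-x))) (p x)) (Set.Icc (-(p (-y))) (p y)) := by
  have hp0 : p 0 = 0 := by
    have := hsmul 0 le_rfl 0
    simpa using this
  have hax : -(p (-x)) ≤ p x := by
    have := hadd x (-x); rw [add_neg_cancel, hp0] at this; linarith
  have hcy : -(p (-y)) ≤ p y := by
    have := hadd y (-y); rw [add_neg_cancel, hp0] at this; linarith
  have hord : (Set.image2 (fun s t => s * t)
      (Set.Icc (-(p (-x))) (p x)) (Set.Icc (-(p (-y))) (p y))).OrdConnected := by
    rw [← Set.image_prod]
    exact (((isPreconnected_Icc.prod isPreconnected_Icc).image _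
      ((continuous_fst.mul continuous_snd).continuousOn))).ordConnected
  have hbd : p x * p y ∈ Set.image2 (fun s t => s * t)
      (Set.Icc (-(p (-x))) (p x)) (Set.Icc (-(p (-y))) (p y)) :=
    Set.mem_image2_of_mem ⟨hax, le_rfl⟩ ⟨hcy, le_rfl⟩
  have had : (-(p (-x))) * p y ∈ Set.image2 (fun s t => s * t)
      (Set.Icc (-(p (-x))) (p x)) (Set.Icc (-(p (-y))) (p y)) :=
    Set.mem_image2_of_mem ⟨le_rfl, hax⟩ ⟨hcy, le_rfl⟩
  have h1 : p (-(x * y)) ≤ p (-x) * p y := by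
    have := hmul (-x) y; rwa [neg_mul] at this
  have h2 : p (x * y) ≤ p x * p y := hmul x y
  intro r hr
  exact hord.out had hbd ⟨by nlinarith [hr.1], le_trans hr.2 h2⟩
end

section
/- Let A be a unital real normed algebra and let Ω(A) be the collection of nonempty closed bounded subsets of A, ordered by inclusion, with operations α·B = {αb : b ∈ B}, B + C = closure{b + c : b ∈ B, c ∈ C}, and B⋆C = closure{bc : b ∈ B, c ∈ C}. Then every map φ : Ω(A) → ℝ satisfying φ(α·B) = α·φ(B) for all α ∈ ℝ, φ(B + C) = φ(B) + φ(C), φ(B⋆C) = φ(B)·φ(C), and φ(B) = φ(C) whenever B ⊆ C, is identically zero. Consequently there is no nonzero quasi-homomorphism from Ω(A) to ℝ. -/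
/-- Membership in `Ω(A)`: nonempty closed bounded subsets of `A`. -/
def IsOmegaSet {A : Type*} [NormedRing A] (B : Set A) : Prop :=
  B.Nonempty ∧ IsClosed B ∧ Bornology.IsBounded B

/-- every quasi-homomorphism `φ : Ω(A) → ℝ` (the order on `ℝ`
being equality) is identically zero. -/
theorem stmt_11 {A : Type*} [NormedRing A] [NormedAlgebra ℝ A]
    (φ : Set A → ℝ)
    (hsmul : ∀ (α : ℝ) (B : Set A), IsOmegaSet B →
      φ ((fun b => α • b) '' B) = α * φ B)
    (hadd : ∀ B C : Set A, IsOmegaSet B → IsOmegaSet C →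
      φ (closure (Set.image2 (fun b c => b + c) B C)) = φ B + φ C)
    (hmul : ∀ B C : Set A, IsOmegaSet B → IsOmegaSet C →
      φ (closure (Set.image2 (fun b c => b * c) B C)) = φ B * φ C)
    (hmono : ∀ B C : Set A, IsOmegaSet B → IsOmegaSet C → B ⊆ C → φ B = φ C) :
    ∀ B : Set A, IsOmegaSet B → φ B = 0 := by
  intro B hB
  obtain ⟨hne, hcl, hbd⟩ := hB
  have h0 : IsOmegaSet ({0} : Set A) :=
    ⟨Set.singleton_nonempty 0, isClosed_singleton, Bornology.isBounded_singleton⟩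
  have hU : IsOmegaSet (B ∪ {0}) :=
    ⟨hne.mono Set.subset_union_left, hcl.union isClosed_singleton,
      hbd.union Bornology.isBounded_singleton⟩
  -- φ B = φ (B ∪ {0}) = φ {0}
  have h1 : φ B = φ (B ∪ {0}) := hmono B (B ∪ {0}) ⟨hne, hcl, hbd⟩ hU Set.subset_union_left
  have h2 : φ ({0} : Set A) = φ (B ∪ {0}) := hmono _ _ h0 hU Set.subset_union_right
  -- φ {0} = 0 via hsmul with α = 0
  have himg : (fun b : A => (0 : ℝ) • b) '' B = ({0} : Set A) := by
    apply Set.eq_singleton_iff_nonempty_unique_mem.2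
    constructor
    · exact (hne.image _)
    · rintro x ⟨b, _, rfl⟩; simp
  have h3 : φ ({0} : Set A) = 0 := by
    have := hsmul 0 B ⟨hne, hcl, hbd⟩
    rw [himg] at this
    simpa using this
  rw [h1, ← h2, h3]
end

section
/- Let X and Y be quasi-algebras and let φ : X → Y be a surjective quasi-homomorphism that is order preserving in reverse (opr). Then φ is bijective, and its inverse ψ = φ⁻¹ satisfies, for all y₁, y₂ ∈ Y and α ∈ ℝ: ψ(α·y₁) = α·ψ(y₁); ψ(y₁) + ψ(y₂) ≤ ψ(y₁ + y₂); and ψ(y₁) * ψ(y₂) ≤ ψ(y₁ * y₂). -/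
/-- a surjective opr quasi-homomorphism is bijective and its
inverse satisfies the three stated (in)equalities. -/
theorem stmt_12 {X Y : Type*} [PartialOrder X] [PartialOrder Y]
    (QX : QuasiAlgebra X) (QY : QuasiAlgebra Y) (φ : X → Y)
    (hsmul : ∀ (α : ℝ) (x : X), φ (QX.smul α x) = QY.smul α (φ x))
    (hadd : ∀ x y : X, φ (QX.add x y) ≤ QY.add (φ x) (φ y))
    (hmul : ∀ x y : X, φ (QX.mul x y) ≤ QY.mul (φ x) (φ y))
    (hmono : ∀ {x y : X}, x ≤ y → φ x ≤ φ y)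
    (hsurj : Function.Surjective φ)
    (hopr : ∀ {x y : X}, φ x ≤ φ y → x ≤ y) :
    Function.Bijective φ ∧
    ∀ ψ : Y → X, Function.LeftInverse ψ φ → Function.RightInverse ψ φ →
      (∀ (α : ℝ) (y₁ : Y), ψ (QY.smul α y₁) = QX.smul α (ψ y₁)) ∧
      (∀ y₁ y₂ : Y, QX.add (ψ y₁) (ψ y₂) ≤ ψ (QY.add y₁ y₂)) ∧
      (∀ y₁ y₂ : Y, QX.mul (ψ y₁) (ψ y₂) ≤ ψ (QY.mul y₁ y₂)) := by
  have hinj : Function.Injective φ := fun x y h =>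
    le_antisymm (hopr h.le) (hopr h.ge)
  refine ⟨⟨hinj, hsurj⟩, fun ψ hl hr => ⟨?_, ?_, ?_⟩⟩
  · intro α y₁
    have : φ (ψ (QY.smul α y₁)) = φ (QX.smul α (ψ y₁)) := by
      rw [hr, hsmul, hr]
    exact hinj this
  · intro y₁ y₂
    apply hopr
    rw [hr]
    calc φ (QX.add (ψ y₁) (ψ y₂)) ≤ QY.add (φ (ψ y₁)) (φ (ψ y₂)) := hadd _ _
      _ = QY.add y₁ y₂ := by rw [hr, hr]
  · intro y₁ y₂
    apply hopr
    rw [hr]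
    calc φ (QX.mul (ψ y₁) (ψ y₂)) ≤ QY.mul (φ (ψ y₁)) (φ (ψ y₂)) := hmul _ _
      _ = QY.mul y₁ y₂ := by rw [hr, hr]
end

section
/- Let X and Y be quasi-algebras and let φ : X → Y be a map satisfying φ(α·x) = α·φ(x) for all α ∈ ℝ, φ(x + y) ≤ φ(x) + φ(y), and such that φ(x) = 0 implies x = 0 (i.e., ker φ = {0}). If φ(x) is a regular element of Y, then x is a regular element of X. -/
section Aux

variable {X : Type*} [PartialOrder X] (Q : QuasiAlgebra X)

lemma QuasiAlgebra.zero_le_add_neg_s13 (v : X) :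
    Q.zero ≤ Q.add v (Q.smul (-1) v) := by
  have h := Q.add_smul_le 1 (-1) v
  rw [show (1 : ℝ) + (-1) = 0 by norm_num, Q.zero_smul, Q.one_smul] at h
  exact h

/-- Zero is minimal. -/
lemma QuasiAlgebra.eq_zero_of_le_zero {y : X} (h : y ≤ Q.zero) : y = Q.zero := by
  have h1 : Q.smul (-1) y ≤ Q.smul (-1) Q.zero := Q.smul_le_smul (-1) h
  have hz : Q.smul (-1) Q.zero = Q.zero := by
    have : Q.zero = Q.smul 0 Q.zero := (Q.zero_smul Q.zero).symm
    rw [this, Q.smul_smul]; norm_num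
  rw [hz] at h1
  have h2 : Q.zero ≤ Q.add y (Q.smul (-1) y) := Q.zero_le_add_neg_s13 y
  have h3 : Q.add y (Q.smul (-1) y) ≤ Q.add y Q.zero := Q.add_le_add le_rfl h1
  rw [Q.add_zero] at h3
  exact le_antisymm h (h2.trans h3)

/-- If `v + v' = 0` then `v' ≤ -v`. -/
lemma QuasiAlgebra.inv_le_neg {v v' : X} (h : Q.add v v' = Q.zero) :
    v' ≤ Q.smul (-1) v := by
  have h0 := Q.zero_le_add_neg_s13 v
  calc v' = Q.add v' Q.zero := (Q.add_zero v').symm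
    _ ≤ Q.add v' (Q.add v (Q.smul (-1) v)) := Q.add_le_add le_rfl h0
    _ = Q.add (Q.add v' v) (Q.smul (-1) v) := Q.add_assoc _ _ _
    _ = Q.add Q.zero (Q.smul (-1) v) := by rw [Q.add_comm v' v, h]
    _ = Q.smul (-1) v := by rw [Q.add_comm, Q.add_zero]

/-- For a regular element, the negation is an additive inverse. -/
lemma QuasiAlgebra.add_neg_of_regular {v : X} (h : Q.Regular v) :
    Q.add v (Q.smul (-1) v) = Q.zero := by
  obtain ⟨v', hv'⟩ := h
  have h1 : v' ≤ Q.smul (-1) v := Q.inv_le_neg hv'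
  have h2 : v ≤ Q.smul (-1) v' := Q.inv_le_neg (by rw [Q.add_comm]; exact hv')
  have h3 : Q.smul (-1) v ≤ v' := by
    have := Q.smul_le_smul (-1) h2
    rwa [Q.smul_smul, show (-1 : ℝ) * (-1) = 1 by norm_num, Q.one_smul] at this
  rw [le_antisymm h3 h1, hv']

end Aux

/-- if `φ` respects scalar multiplication, is subadditive, has
trivial kernel, and `φ(x)` is regular, then `x` is regular. -/
theorem stmt_13 {X Y : Type*} [PartialOrder X] [PartialOrder Y]
    (QX : QuasiAlgebra X) (QY : QuasiAlgebra Y) (φ : X → Y)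
    (hsmul : ∀ (α : ℝ) (x : X), φ (QX.smul α x) = QY.smul α (φ x))
    (hadd : ∀ x y : X, φ (QX.add x y) ≤ QY.add (φ x) (φ y))
    (hker : ∀ x : X, φ x = QY.zero → x = QX.zero)
    (x : X) (hx : QY.Regular (φ x)) : QX.Regular x := by
  refine ⟨QX.smul (-1) x, hker _ ?_⟩
  apply QY.eq_zero_of_le_zero
  have h1 : φ (QX.add x (QX.smul (-1) x)) ≤ QY.add (φ x) (φ (QX.smul (-1) x)) :=
    hadd _ _
  rw [hsmul] at h1
  rwa [QY.add_neg_of_regular hx] at h1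
end

section
/- Let X be a quasi-algebra with an identity element 1 (1*x = x*1 = x for all x). If x ∈ X is product-invertible (there exists x⁻¹ with x*x⁻¹ = x⁻¹*x = 1), then multiplication by x distributes over addition: x*(y + z) = x*y + x*z for all y, z ∈ X. -/
/-- multiplication by a unit distributes over addition. -/
theorem stmt_14 {X : Type*} [PartialOrder X] (Q : QuasiAlgebra X)
    (one : X) (hone : ∀ x : X, Q.mul one x = x ∧ Q.mul x one = x)
    (x : X) (hx : ∃ xi : X, Q.mul x xi = one ∧ Q.mul xi x = one) :
    ∀ y z : X, Q.mul x (Q.add y z) = Q.add (Q.mul x y) (Q.mul x z) := by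
  obtain ⟨xi, hxi1, hxi2⟩ := hx
  intro y z
  apply le_antisymm (Q.mul_add_le x y z)
  have h1 : Q.mul xi (Q.add (Q.mul x y) (Q.mul x z)) ≤ Q.add y z := by
    calc Q.mul xi (Q.add (Q.mul x y) (Q.mul x z))
        ≤ Q.add (Q.mul xi (Q.mul x y)) (Q.mul xi (Q.mul x z)) :=
          Q.mul_add_le _ _ _
      _ = Q.add y z := by
          rw [Q.mul_assoc, Q.mul_assoc, hxi2, (hone y).1, (hone z).1]
  have h2 := Q.mul_le_mul (le_refl x) h1
  calc Q.add (Q.mul x y) (Q.mul x z)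
      = Q.mul x (Q.mul xi (Q.add (Q.mul x y) (Q.mul x z))) := by
        rw [Q.mul_assoc, hxi1, (hone _).1]
    _ ≤ Q.mul x (Q.add y z) := h2
end

section
/- Let X be a unital quasi-algebra whose identity 1 is regular (i.e., 1 − 1 = 0). Then every unit x ∈ G(X) is regular (x − x = 0). -/
/-- if the identity of a unital quasi-algebra is regular, then
every unit is regular. -/
theorem stmt_15 {X : Type*} [PartialOrder X] (Q : QuasiAlgebra X)
    (one : X) (hone : ∀ x : X, Q.mul one x = x ∧ Q.mul x one = x)
    (h1 : Q.sub one one = Q.zero)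
    (x : X) (hx : ∃ xi : X, Q.mul x xi = one ∧ Q.mul xi x = one) :
    Q.sub x x = Q.zero := by
  obtain ⟨xi, hxi1, hxi2⟩ := hx
  -- zero * y = zero and y * zero = zero
  have hz : ∀ y : X, Q.mul Q.zero y = Q.zero := by
    intro y
    have : Q.mul Q.zero y = Q.mul (Q.smul 0 Q.zero) y := by rw [Q.zero_smul]
    rw [this, ← Q.smul_mul, Q.zero_smul]
  -- -y = ((-1)·1) * y
  have hneg : ∀ y : X, Q.neg y = Q.mul (Q.neg one) y := by
    intro y
    unfold QuasiAlgebra.neg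
    rw [← (hone y).1, Q.smul_mul, (hone y).1]
  have h1' : Q.add one (Q.neg one) = Q.zero := h1
  -- lower bound : zero ≤ x - x
  have hlow : Q.zero ≤ Q.sub x x := by
    have h := Q.add_mul_le one (Q.neg one) x
    rw [h1', hz, (hone x).1, ← hneg] at h
    exact h
  -- upper bound
  have hup : Q.sub x x ≤ Q.zero := by
    have h := Q.add_mul_le x (Q.neg x) xi
    have hnm : Q.mul (Q.neg x) xi = Q.neg one := by
      unfold QuasiAlgebra.neg
      rw [← Q.smul_mul, hxi1]
    rw [hnm, hxi1, h1'] at h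
    have h2 : Q.mul (Q.mul (Q.sub x x) xi) x ≤ Q.mul Q.zero x :=
      Q.mul_le_mul h (le_refl x)
    rw [hz, ← Q.mul_assoc, hxi2, (hone (Q.sub x x)).2] at h2
    exact h2
  exact le_antisymm hup hlow
end

section
/- Let X be a unital quasi-algebra whose identity 1 is regular, let x ∈ G(X) be a unit and y ∈ X. Then QSp(x*y) ⊆ {0} ∪ QSp(y*x), where QSp denotes the quasi-spectrum. -/
/-- The spectrum of a regular element `t` relative to the algebra `X_r` of
regular elements: the set of `λ ∈ ℝ` such that `λ·1 - t` has no regular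
two-sided product-inverse. -/
def SpReg {X : Type*} [PartialOrder X] (Q : QuasiAlgebra X) (one : X)
    (t : X) : Set ℝ :=
  {l : ℝ | ¬ ∃ u : X, Q.Regular u ∧
    Q.mul (Q.sub (Q.smul l one) t) u = one ∧
    Q.mul u (Q.sub (Q.smul l one) t) = one}

/-- The quasi-spectrum: union of spectra of regular elements below `x`. -/
def QSp {X : Type*} [PartialOrder X] (Q : QuasiAlgebra X) (one : X)
    (x : X) : Set ℝ :=
  {l : ℝ | ∃ t : X, Q.Regular t ∧ t ≤ x ∧ l ∈ SpReg Q one t}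


section Aux17

variable {X : Type*} [PartialOrder X] (Q : QuasiAlgebra X)

theorem my_mul_zero (a : X) : Q.mul a Q.zero = Q.zero := by
  have h := Q.mul_smul 0 a a
  simp only [Q.zero_smul] at h
  exact h.symm

theorem my_zero_mul (a : X) : Q.mul Q.zero a = Q.zero := by
  have h := Q.smul_mul 0 a a
  simp only [Q.zero_smul] at h
  exact h.symm

/-- Conjugation `u ↦ q * (u * p)`. -/
def myconj (p q u : X) : X := Q.mul q (Q.mul u p)

variable (one p q : X)

theorem myconj_conj (hone : ∀ x : X, Q.mul one x = x ∧ Q.mul x one = x)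
    (hpq : Q.mul p q = one) (u : X) :
    myconj Q q p (myconj Q p q u) = u := by
  unfold myconj
  simp only [Q.mul_assoc]
  rw [hpq, (hone u).1, ← Q.mul_assoc u p q, hpq, (hone u).2]

theorem myconj_mono {u v : X} (h : u ≤ v) : myconj Q p q u ≤ myconj Q p q v :=
  Q.mul_le_mul le_rfl (Q.mul_le_mul h le_rfl)

theorem myconj_add_le (u v : X) :
    myconj Q p q (Q.add u v) ≤ Q.add (myconj Q p q u) (myconj Q p q v) := by
  have h1 : Q.mul (Q.add u v) p ≤ Q.add (Q.mul u p) (Q.mul v p) := Q.add_mul_le u v p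
  have h2 := Q.mul_le_mul (le_refl q) h1
  exact le_trans h2 (Q.mul_add_le q (Q.mul u p) (Q.mul v p))

theorem myconj_add (hone : ∀ x : X, Q.mul one x = x ∧ Q.mul x one = x)
    (hpq : Q.mul p q = one) (hqp : Q.mul q p = one) (u v : X) :
    myconj Q p q (Q.add u v) = Q.add (myconj Q p q u) (myconj Q p q v) := by
  refine le_antisymm (myconj_add_le Q p q u v) ?_
  have h := myconj_add_le Q q p (myconj Q p q u) (myconj Q p q v)
  rw [myconj_conj Q one p q hone hpq u, myconj_conj Q one p q hone hpq v] at h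
  have h2 := myconj_mono Q p q h
  rwa [myconj_conj Q one q p hone hqp
    (Q.add (myconj Q p q u) (myconj Q p q v))] at h2

theorem myconj_smul (a : ℝ) (u : X) :
    myconj Q p q (Q.smul a u) = Q.smul a (myconj Q p q u) := by
  unfold myconj
  rw [← Q.smul_mul, ← Q.mul_smul]

theorem myconj_one (hone : ∀ x : X, Q.mul one x = x ∧ Q.mul x one = x)
    (hqp : Q.mul q p = one) : myconj Q p q one = one := by
  unfold myconj
  rw [(hone p).1, hqp]

theorem myconj_zero : myconj Q p q Q.zero = Q.zero := by
  unfold myconj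
  rw [my_zero_mul, my_mul_zero]

theorem myconj_mul (hone : ∀ x : X, Q.mul one x = x ∧ Q.mul x one = x)
    (hpq : Q.mul p q = one) (u v : X) :
    myconj Q p q (Q.mul u v) = Q.mul (myconj Q p q u) (myconj Q p q v) := by
  unfold myconj
  simp only [Q.mul_assoc]
  rw [← Q.mul_assoc (Q.mul q u) p q, hpq, (hone (Q.mul q u)).2]

theorem myconj_sub (hone : ∀ x : X, Q.mul one x = x ∧ Q.mul x one = x)
    (hpq : Q.mul p q = one) (hqp : Q.mul q p = one) (u v : X) :
    myconj Q p q (Q.sub u v) = Q.sub (myconj Q p q u) (myconj Q p q v) := by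
  simp only [QuasiAlgebra.sub, QuasiAlgebra.neg]
  rw [myconj_add Q one p q hone hpq hqp, myconj_smul]

theorem myconj_regular (hone : ∀ x : X, Q.mul one x = x ∧ Q.mul x one = x)
    (hpq : Q.mul p q = one) (hqp : Q.mul q p = one) {t : X}
    (ht : Q.Regular t) : Q.Regular (myconj Q p q t) := by
  obtain ⟨t', ht'⟩ := ht
  exact ⟨myconj Q p q t', by
    rw [← myconj_add Q one p q hone hpq hqp, ht', myconj_zero]⟩

end Aux17

/-- if `x` is a unit, `QSp(x*y) ⊆ {0} ∪ QSp(y*x)`. -/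
theorem stmt_17 {X : Type*} [PartialOrder X] (Q : QuasiAlgebra X)
    (one : X) (hone : ∀ x : X, Q.mul one x = x ∧ Q.mul x one = x)
    (h1r : Q.Regular one)
    (x y : X) (hx : ∃ xi : X, Q.mul x xi = one ∧ Q.mul xi x = one) :
    QSp Q one (Q.mul x y) ⊆ {0} ∪ QSp Q one (Q.mul y x) := by
  rintro l ⟨t, htreg, htle, hsp⟩
  right
  obtain ⟨xi, hxxi, hxix⟩ := hx
  refine ⟨myconj Q x xi t, myconj_regular Q one x xi hone hxxi hxix htreg, ?_, ?_⟩
  · have h1 : myconj Q x xi t ≤ myconj Q x xi (Q.mul x y) := myconj_mono Q x xi htle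
    have h2 : myconj Q x xi (Q.mul x y) = Q.mul y x := by
      unfold myconj
      rw [← Q.mul_assoc x y x, Q.mul_assoc xi x (Q.mul y x), hxix,
        (hone (Q.mul y x)).1]
    rwa [h2] at h1
  · rintro ⟨v, hvreg, hv1, hv2⟩
    apply hsp
    have hkey : Q.sub (Q.smul l one) t =
        myconj Q xi x (Q.sub (Q.smul l one) (myconj Q x xi t)) := by
      rw [myconj_sub Q one xi x hone hxix hxxi, myconj_smul,
        myconj_one Q one xi x hone hxxi,
        myconj_conj Q one x xi hone hxxi t]
    refine ⟨myconj Q xi x v, myconj_regular Q one xi x hone hxix hxxi hvreg, ?_, ?_⟩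
    · rw [hkey, ← myconj_mul Q one xi x hone hxix, hv1,
        myconj_one Q one xi x hone hxxi]
    · rw [hkey, ← myconj_mul Q one xi x hone hxix, hv2,
        myconj_one Q one xi x hone hxxi]
end
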